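/- The continuous map f : S² → Conf₃(S³) defined by f(ξ) = (j(q₁), j(q₂), j(6ξ)) is well defined (its values are triples of pairwise distinct points of S³) and is null-homotopic, i.e. homotopic to a constant map into Conf₃(S³). (This expresses that, after the inclusion of Conf₃(ℝ³) into Conf₃(S³), the sum of the second-homotopy classes β₃₁ + β₃₂ of the fiber spheres vanishes.) -/

import Mathlib

open Metric

noncomputable section

abbrev E3 : Type := EuclideanSpace ℝ (Fin 3)
abbrev E4 : Type := EuclideanSpace ℝ (Fin 4)

/-- `e = (1,0,0) ∈ ℝ³`. -/
def e : E3 := EuclideanSpace.single (0 : Fin 3) (1 : ℝ)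

def q1 : E3 := 0
def q2 : E3 := (4 : ℝ) • e
def q3 : E3 := (8 : ℝ) • e

/-- The unit sphere `S² ⊂ ℝ³`. -/
abbrev S2 : Type := sphere (0 : E3) 1

/-- The unit sphere `S³ ⊂ ℝ⁴`. -/
abbrev S3 : Type := sphere (0 : E4) 1

/-- Inverse stereographic projection `j : ℝ³ → ℝ⁴`, `j(x) = (2x, ‖x‖² − 1)/(‖x‖² + 1)`;
its image lies on the unit sphere `S³`, missing only the north pole `(0,0,0,1)`. -/
def jmap (x : E3) : E4 :=
  (WithLp.equiv 2 (Fin 4 → ℝ)).symm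
    ![2 * x 0 / (‖x‖ ^ 2 + 1), 2 * x 1 / (‖x‖ ^ 2 + 1), 2 * x 2 / (‖x‖ ^ 2 + 1),
      (‖x‖ ^ 2 - 1) / (‖x‖ ^ 2 + 1)]

/-- The configuration space `Conf₃(S³)` of 3 (ordered, pairwise distinct) points of `S³`,
with the subspace topology. -/
abbrev Conf3S : Type :=
  {p : S3 × S3 × S3 // p.1 ≠ p.2.1 ∧ p.1 ≠ p.2.2 ∧ p.2.1 ≠ p.2.2}

/-!
The last coordinate of `j x` is `(‖x‖² - 1)/(‖x‖² + 1)`, a strictly increasing function of `‖x‖`.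
Since `‖q₁‖ = 0 < ‖q₂‖ = 4 < 6 = ‖6ξ‖`, every third point `j(6ξ)` lies in the open cap
`{x ∈ S³ | x₃ > j(q₂)₃}` around the north pole, which contains neither `j(q₁)` nor `j(q₂)`.
That cap is contractible: radial projection retracts onto it the convex set it cuts out of the
closed unit ball. So `j(6ξ)` can be contracted inside the cap while `j(q₁)`, `j(q₂)` stay fixed.
-/

open ContinuousMap
open scoped InnerProductSpace

theorem ContractibleSpace.of_retraction {X Y : Type*} [TopologicalSpace X] [TopologicalSpace Y]
    [ContractibleSpace Y] (i : C(X, Y)) (r : C(Y, X)) (hri : r.comp i = .id X) :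
    ContractibleSpace X := by
  rw [contractible_iff_id_nullhomotopic, ← hri]
  exact ((id_nullhomotopic Y).comp_left i).comp_right r

section SphereCap

variable {E : Type*} [NormedAddCommGroup E] [InnerProductSpace ℝ E]

def sphereCap (n : E) (c : ℝ) : Set E := sphere 0 1 ∩ {x | c < ⟪n, x⟫_ℝ}

lemma lt_inner_inv_norm_smul {n y : E} {c : ℝ} (hc : 0 ≤ c) (hy : ‖y‖ ≤ 1)
    (h : c < ⟪n, y⟫_ℝ) : c < ⟪n, ‖y‖⁻¹ • y⟫_ℝ := by
  have hy₀ : 0 < ‖y‖ := norm_pos_iff.2 (by rintro rfl; simp only [inner_zero_right] at h; linarith)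
  rw [inner_smul_right]
  calc c < ⟪n, y⟫_ℝ := h
    _ ≤ ‖y‖⁻¹ * ⟪n, y⟫_ℝ := le_mul_of_one_le_left (by linarith) (one_le_inv₀ hy₀ |>.2 hy)

theorem sphereCap.contractibleSpace {n : E} {c : ℝ} (hn : ‖n‖ = 1) (hc₀ : 0 ≤ c) (hc₁ : c < 1) :
    ContractibleSpace (sphereCap n c) := by
  set K : Set E := closedBall 0 1 ∩ {y | c < ⟪n, y⟫_ℝ}
  have hK : Convex ℝ K :=
    (convex_closedBall 0 1).inter (convex_halfSpace_gt (innerₛₗ ℝ n).isLinear c)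
  have hnK : n ∈ K := ⟨by simp [hn], by simp [hn, hc₁]⟩
  have := hK.contractibleSpace ⟨n, hnK⟩
  have hK₀ : ∀ y ∈ K, y ≠ 0 := by
    rintro y ⟨-, hy⟩ rfl
    simp only [Set.mem_ofPred_eq, inner_zero_right] at hy; linarith
  refine .of_retraction (Y := K)
    ⟨fun x => ⟨x, sphere_subset_closedBall x.2.1, x.2.2⟩, by fun_prop⟩
    ⟨fun y => ⟨‖(y : E)‖⁻¹ • (y : E), ?_, ?_⟩, ?_⟩ ?_
  · simp [norm_smul, hK₀ y y.2]
  · exact lt_inner_inv_norm_smul hc₀ (mem_closedBall_zero_iff.1 y.2.1) y.2.2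
  · exact ((continuous_subtype_val.norm.inv₀ fun y => norm_ne_zero_iff.2 (hK₀ y y.2)).smul
      continuous_subtype_val).subtype_mk _
  · ext x
    simp [mem_sphere_zero_iff_norm.1 x.2.1]

end SphereCap

lemma norm_jmap (x : E3) : ‖jmap x‖ = 1 := by
  have hx : ‖x‖ ^ 2 = x 0 ^ 2 + x 1 ^ 2 + x 2 ^ 2 := by
    simp [EuclideanSpace.real_norm_sq_eq, Fin.sum_univ_three]
  have h : ‖jmap x‖ ^ 2 = 1 := by
    rw [EuclideanSpace.real_norm_sq_eq, Fin.sum_univ_four]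
    simp only [jmap, WithLp.equiv_symm_apply, Matrix.cons_val_zero, Matrix.cons_val_one,
      Matrix.cons_val]
    field_simp
    rw [hx]; ring
  exact (pow_eq_one_iff_of_nonneg (norm_nonneg _) two_ne_zero).1 h

@[fun_prop]
lemma continuous_jmap : Continuous jmap :=
  (PiLp.continuous_toLp 2 _).comp (by fun_prop (disch := intros; positivity))

lemma jmap_apply_three (x : E3) : jmap x 3 = (‖x‖ ^ 2 - 1) / (‖x‖ ^ 2 + 1) := rfl

lemma jmap_apply_three_lt {x y : E3} (h : ‖x‖ < ‖y‖) : jmap x 3 < jmap y 3 := by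
  have : ‖x‖ ^ 2 < ‖y‖ ^ 2 := pow_lt_pow_left₀ h (norm_nonneg _) two_ne_zero
  rw [jmap_apply_three, jmap_apply_three, div_lt_div_iff₀ (by positivity) (by positivity)]
  nlinarith

def northPole : E4 := EuclideanSpace.single 3 1

lemma norm_northPole : ‖northPole‖ = 1 := by simp [northPole]

lemma inner_northPole (x : E4) : ⟪northPole, x⟫_ℝ = x 3 := by
  simp [northPole, EuclideanSpace.inner_single_left]

lemma jmap_mem_sphereCap {x y : E3} (h : ‖y‖ < ‖x‖) :
    jmap x ∈ sphereCap northPole (jmap y 3) :=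
  ⟨mem_sphere_zero_iff_norm.2 (norm_jmap x), by
    show jmap y 3 < ⟪northPole, jmap x⟫_ℝ
    rw [inner_northPole]
    exact jmap_apply_three_lt h⟩

def jS3 (x : E3) : S3 := ⟨jmap x, mem_sphere_zero_iff_norm.2 (norm_jmap x)⟩

lemma ne_of_apply_three_lt {p q : S3} (h : (p : E4) 3 < (q : E4) 3) : p ≠ q := by
  rintro rfl
  exact h.false

def conf3OfCap (a b : S3) (hab : (a : E4) 3 < (b : E4) 3) :
    C(sphereCap northPole ((b : E4) 3), Conf3S) where
  toFun x :=
    have hbx : (b : E4) 3 < (x : E4) 3 := inner_northPole (x : E4) ▸ x.2.2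
    ⟨(a, b, ⟨x, x.2.1⟩), ne_of_apply_three_lt hab, ne_of_apply_three_lt (hab.trans hbx),
      ne_of_apply_three_lt hbx⟩
  continuous_toFun := (continuous_const.prodMk
    (continuous_const.prodMk (continuous_subtype_val.subtype_mk _))).subtype_mk _

lemma norm_q1 : ‖q1‖ = 0 := by simp [q1]

lemma norm_q2 : ‖q2‖ = 4 := by simp [q2, e, norm_smul]

lemma jmap_q2_apply_three : jmap q2 3 = 15 / 17 := by
  rw [jmap_apply_three, norm_q2]; norm_num

/-- The spherical cycle `ξ ↦ (j(q₁), j(q₂), j(6ξ))` is a well defined map `S² → Conf₃(S³)`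
and is null-homotopic: after inclusion into `Conf₃(S³)`, the class `β₃₁ + β₃₂` of the sum of
the fiber spheres vanishes in `π₂(Conf₃(S³))`. -/
theorem fiber_sum_nullhomotopic_in_conf3_sphere :
    ∃ f : C(S2, Conf3S),
      (∀ ξ : S2,
        ((f ξ).1.1 : E4) = jmap q1 ∧
        ((f ξ).1.2.1 : E4) = jmap q2 ∧
        ((f ξ).1.2.2 : E4) = jmap ((6 : ℝ) • (ξ : E3))) ∧
      ∃ y : Conf3S, f.Homotopic (ContinuousMap.const _ y) := by
  have h₆ (ξ : S2) : ‖q2‖ < ‖(6 : ℝ) • (ξ : E3)‖ := by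
    rw [norm_q2, norm_smul, norm_eq_of_mem_sphere ξ]
    norm_num
  let g : C(S2, sphereCap northPole (jmap q2 3)) :=
    ⟨fun ξ => ⟨jmap ((6 : ℝ) • (ξ : E3)), jmap_mem_sphereCap (h₆ ξ)⟩,
      by fun_prop⟩
  have : ContractibleSpace (sphereCap northPole (jmap q2 3)) :=
    sphereCap.contractibleSpace norm_northPole (by norm_num [jmap_q2_apply_three])
      (by norm_num [jmap_q2_apply_three])
  have h₁₂ : jmap q1 3 < jmap q2 3 := jmap_apply_three_lt (by norm_num [norm_q1, norm_q2])
  exact ⟨(conf3OfCap (jS3 q1) (jS3 q2) h₁₂).comp g, fun ξ => ⟨rfl, rfl, rfl⟩,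
    ((id_nullhomotopic _).comp_left g).comp_right _⟩
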